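/- arXiv:2302.02052 — 7 statements merged into one kernel-verified Lean document; each statement's English description precedes it below -/
import Mathlib

section
/- The function g is differentiable on ℝ, and its derivative is given by g'(z) = (∫_a^b E(t)·exp(z·E(t)) dt) / (∫_a^b exp(z·E(t)) dt) for every z ∈ ℝ. -/
/-!
Up to the additive constant `log (1 / (b - a))`, `g` is the cumulant-generating function of `E`
under Lebesgue measure on `(a, b]`. As `E` is bounded there, `exp (z * E)` is integrable for every
`z`, so the cumulant-generating function is analytic on all of `ℝ` and its derivative at `z` is
the mean of `E` under the measure tilted by `exp (z * E)`.
-/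

open MeasureTheory ProbabilityTheory Real Set

lemma integrableExpSet_restrict_Ioc_eq_univ {E : ℝ → ℝ} {a b : ℝ}
    (hE : ContinuousOn E (Icc a b)) :
    integrableExpSet E (volume.restrict (Ioc a b)) = univ :=
  eq_univ_of_forall fun _ =>
    ((continuous_exp.comp_continuousOn (continuousOn_const.mul hE)).integrableOn_Icc).mono_set
      Ioc_subset_Icc_self

lemma log_const_mul_intervalIntegral_exp_eq_cgf {E : ℝ → ℝ} {a b c : ℝ} (hab : a < b)
    (hE : ContinuousOn E (Icc a b)) (hc : c ≠ 0) (z : ℝ) :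
    log (c * ∫ t in a..b, exp (z * E t)) = log c + cgf E (volume.restrict (Ioc a b)) z := by
  have hμ : volume.restrict (Ioc a b) ≠ 0 := by simp [hab]
  have hmgf := mgf_pos' hμ ((integrableExpSet_restrict_Ioc_eq_univ hE).symm ▸ mem_univ z)
  rw [intervalIntegral.integral_of_le hab.le]
  exact log_mul hc hmgf.ne'

/-- Context: `a < b`, `E` continuous on `[a,b]`,
`g z = log( (1/(b-a)) * ∫_a^b exp(z * E t) dt )`.
Statement: `g` is differentiable on `ℝ` and its derivative is
`g'(z) = (∫_a^b E t * exp(z * E t) dt) / (∫_a^b exp(z * E t) dt)`. -/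
theorem stmt_0 (a b : ℝ) (hab : a < b) (E : ℝ → ℝ)
    (hE : ContinuousOn E (Set.Icc a b))
    (g : ℝ → ℝ)
    (hg : ∀ z : ℝ, g z = Real.log ((1 / (b - a)) * ∫ t in a..b, Real.exp (z * E t))) :
    Differentiable ℝ g ∧
      ∀ z : ℝ, deriv g z =
        (∫ t in a..b, E t * Real.exp (z * E t)) / (∫ t in a..b, Real.exp (z * E t)) := by
  set μ := volume.restrict (Ioc a b)
  have hg_cgf : g = fun z => log (1 / (b - a)) + cgf E μ z := by
    funext z
    rw [hg, log_const_mul_intervalIntegral_exp_eq_cgf hab hE (by simpa using sub_ne_zero.2 hab.ne')]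
  have hint : ∀ z, z ∈ interior (integrableExpSet E μ) := by
    simp [μ, integrableExpSet_restrict_Ioc_eq_univ hE]
  refine ⟨fun z => ?_, fun z => ?_⟩
  · rw [hg_cgf]
    exact (analyticAt_cgf (hint z)).differentiableAt.const_add _
  · rw [hg_cgf, deriv_const_add, deriv_cgf (hint z), mgf, intervalIntegral.integral_of_le hab.le,
      intervalIntegral.integral_of_le hab.le]
end

section
/- For every z ∈ ℝ, [ (∫_a^b exp(z·E(t)) dt)·(∫_a^b E(t)²·exp(z·E(t)) dt) − (∫_a^b E(t)·exp(z·E(t)) dt)² ] / (∫_a^b exp(z·E(t)) dt)² ≤ sup_{t,s ∈ [a,b]} (1/2)·(E(t) − E(s))². -/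
open MeasureTheory intervalIntegral

/-- Context: `a < b`, `E` continuous on `[a,b]`.
Statement: for every `z`,
`[ (∫ exp(zE)) (∫ E² exp(zE)) − (∫ E exp(zE))² ] / (∫ exp(zE))²
   ≤ sup_{t,s ∈ [a,b]} (1/2)(E(t) − E(s))²`. -/
theorem stmt_4 (a b : ℝ) (hab : a < b) (E : ℝ → ℝ)
    (hE : ContinuousOn E (Set.Icc a b)) :
    ∀ z : ℝ,
      ((∫ t in a..b, Real.exp (z * E t)) * (∫ t in a..b, (E t) ^ 2 * Real.exp (z * E t))
          - (∫ t in a..b, E t * Real.exp (z * E t)) ^ 2)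
        / (∫ t in a..b, Real.exp (z * E t)) ^ 2
      ≤ sSup {x : ℝ | ∃ t ∈ Set.Icc a b, ∃ s ∈ Set.Icc a b,
          x = (1 / 2) * (E t - E s) ^ 2} := by
  intro z
  have hab' : a ≤ b := hab.le
  set w : ℝ → ℝ := fun t => Real.exp (z * E t) with hw_def
  have hwc : ContinuousOn w (Set.Icc a b) :=
    Real.continuous_exp.comp_continuousOn (continuousOn_const.mul hE)
  have hwi : IntervalIntegrable w volume a b := hwc.intervalIntegrable_of_Icc hab'
  have hE1i : IntervalIntegrable (fun t => E t * w t) volume a b :=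
    (hE.mul hwc).intervalIntegrable_of_Icc hab'
  have hE2i : IntervalIntegrable (fun t => (E t) ^ 2 * w t) volume a b :=
    ((hE.pow 2).mul hwc).intervalIntegrable_of_Icc hab'
  have hne : (Set.Icc a b).Nonempty := Set.nonempty_Icc.mpr hab'
  obtain ⟨t₁, ht₁, hmax⟩ := isCompact_Icc.exists_isMaxOn hne hE
  obtain ⟨t₀, ht₀, hmin⟩ := isCompact_Icc.exists_isMinOn hne hE
  have hmin' : ∀ x ∈ Set.Icc a b, E t₀ ≤ E x := fun x hx => hmin hx
  have hmax' : ∀ x ∈ Set.Icc a b, E x ≤ E t₁ := fun x hx => hmax hx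
  set m : ℝ := E t₀
  set M : ℝ := E t₁
  set c : ℝ := (m + M) / 2 with hc_def
  set K : ℝ := ((M - m) / 2) ^ 2 with hK_def
  set Z : ℝ := ∫ t in a..b, w t with hZ_def
  set A1 : ℝ := ∫ t in a..b, E t * w t with hA1_def
  set A2 : ℝ := ∫ t in a..b, (E t) ^ 2 * w t with hA2_def
  have hZpos : 0 < Z :=
    intervalIntegral.intervalIntegral_pos_of_pos_on hwi (fun x _ => Real.exp_pos _) hab
  -- I1
  have hI1 : (∫ t in a..b, (E t - c) * w t) = A1 - c * Z := by
    have : ∀ t, (E t - c) * w t = E t * w t - c * w t := fun t => by ring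
    rw [intervalIntegral.integral_congr (fun t _ => this t),
      intervalIntegral.integral_sub hE1i (hwi.const_mul c),
      intervalIntegral.integral_const_mul]
  have hI2i : IntervalIntegrable (fun t => (E t - c) ^ 2 * w t) volume a b :=
    (((hE.sub continuousOn_const).pow 2).mul hwc).intervalIntegrable_of_Icc hab'
  have hI2 : (∫ t in a..b, (E t - c) ^ 2 * w t) = A2 - (2 * c) * A1 + c ^ 2 * Z := by
    have : ∀ t, (E t - c) ^ 2 * w t
        = ((E t) ^ 2 * w t - (2 * c) * (E t * w t)) + c ^ 2 * w t := fun t => by ring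
    rw [intervalIntegral.integral_congr (fun t _ => this t),
      intervalIntegral.integral_add (hE2i.sub (hE1i.const_mul (2 * c))) (hwi.const_mul (c ^ 2)),
      intervalIntegral.integral_sub hE2i (hE1i.const_mul (2 * c)),
      intervalIntegral.integral_const_mul, intervalIntegral.integral_const_mul]
  -- pointwise bound
  have hpt : ∀ x ∈ Set.Icc a b, (E x - c) ^ 2 * w x ≤ K * w x := by
    intro x hx
    have h1 : m ≤ E x := hmin' x hx
    have h2 : E x ≤ M := hmax' x hx
    have hsq : (E x - c) ^ 2 ≤ K := by
      rw [hK_def, hc_def]; nlinarith [mul_nonneg (sub_nonneg.mpr h1) (sub_nonneg.mpr h2)]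
    exact mul_le_mul_of_nonneg_right hsq (Real.exp_pos _).le
  have hI2le : (∫ t in a..b, (E t - c) ^ 2 * w t) ≤ K * Z := by
    rw [hZ_def, ← intervalIntegral.integral_const_mul]
    exact intervalIntegral.integral_mono_on hab' hI2i (hwi.const_mul K) hpt
  have hI2nonneg : 0 ≤ (∫ t in a..b, (E t - c) ^ 2 * w t) :=
    intervalIntegral.integral_nonneg hab'
      (fun x _ => mul_nonneg (sq_nonneg _) (Real.exp_pos _).le)
  -- key
  have key : Z * A2 - A1 ^ 2 ≤ K * Z ^ 2 := by
    have hid : Z * A2 - A1 ^ 2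
        = Z * (∫ t in a..b, (E t - c) ^ 2 * w t) - (∫ t in a..b, (E t - c) * w t) ^ 2 := by
      rw [hI1, hI2]; ring
    have h1 : Z * (∫ t in a..b, (E t - c) ^ 2 * w t) ≤ Z * (K * Z) :=
      mul_le_mul_of_nonneg_left hI2le hZpos.le
    nlinarith [sq_nonneg (∫ t in a..b, (E t - c) * w t)]
  -- sSup
  set S : Set ℝ := {x : ℝ | ∃ t ∈ Set.Icc a b, ∃ s ∈ Set.Icc a b,
      x = (1 / 2) * (E t - E s) ^ 2}
  have hbdd : BddAbove S := by
    refine ⟨(1 / 2) * (M - m) ^ 2, ?_⟩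
    rintro x ⟨t, ht, s, hs, rfl⟩
    have h1 := hmin' t ht; have h2 := hmax' t ht
    have h3 := hmin' s hs; have h4 := hmax' s hs
    nlinarith
  have hmem : (1 / 2) * (M - m) ^ 2 ∈ S := ⟨t₁, ht₁, t₀, ht₀, rfl⟩
  have hsup : (1 / 2) * (M - m) ^ 2 ≤ sSup S := le_csSup hbdd hmem
  have hKle : K ≤ (1 / 2) * (M - m) ^ 2 := by
    rw [hK_def]; nlinarith [sq_nonneg (M - m)]
  refine le_trans ?_ hsup
  rw [div_le_iff₀ (pow_pos hZpos 2)]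
  calc Z * A2 - A1 ^ 2 ≤ K * Z ^ 2 := key
    _ ≤ (1 / 2) * (M - m) ^ 2 * Z ^ 2 :=
        mul_le_mul_of_nonneg_right hKle (sq_nonneg _)
end

section
/- If there exist t, s ∈ [a,b] with E(t) ≠ E(s), then g is twice differentiable on ℝ and its second derivative satisfies 0 < g''(z) ≤ sup_{t,s ∈ [a,b]} (1/2)·(E(t) − E(s))² for every z ∈ ℝ; in particular g'' is bounded and strictly positive. -/
/-!
`g` is the cumulant generating function of `E` under the uniform distribution on `[a, b]`, so
`g''(z)` is the variance of `E` under the exponentially tilted measure. That variance is positive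
because a continuous nonconstant `E` is not almost surely constant, and by Popoviciu's inequality
it is at most `((max E - min E) / 2) ^ 2`, below the supremum `(max E - min E) ^ 2 / 2`.
-/

open MeasureTheory ProbabilityTheory Set Real
open scoped ENNReal

namespace ProbabilityTheory

section Cond

variable {Ω : Type*} {mΩ : MeasurableSpace Ω} {μ : Measure Ω} {s : Set Ω}

lemma cond_absolutelyContinuous_restrict : μ[|s] ≪ μ.restrict s :=
  Measure.smul_absolutelyContinuous

lemma restrict_absolutelyContinuous_cond (hs : μ s ≠ ∞) : μ.restrict s ≪ μ[|s] :=
  Measure.absolutelyContinuous_smul (ENNReal.inv_ne_zero.2 hs)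

end Cond

section CGF

variable {Ω : Type*} {mΩ : MeasurableSpace Ω} {μ : Measure Ω} {X : Ω → ℝ} {m M : ℝ}

lemma integrableExpSet_eq_univ_of_mem_Icc [IsFiniteMeasure μ] (hX : AEMeasurable X μ)
    (hb : ∀ᵐ ω ∂μ, X ω ∈ Icc m M) : integrableExpSet X μ = univ :=
  eq_univ_of_forall fun _ ↦ integrable_exp_mul_of_mem_Icc hX hb

lemma analyticOnNhd_cgf_of_mem_Icc [IsFiniteMeasure μ] (hX : AEMeasurable X μ)
    (hb : ∀ᵐ ω ∂μ, X ω ∈ Icc m M) : AnalyticOnNhd ℝ (cgf X μ) univ := by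
  simpa [integrableExpSet_eq_univ_of_mem_Icc hX hb] using analyticOnNhd_cgf (X := X) (μ := μ)

variable [IsProbabilityMeasure μ]

lemma iteratedDeriv_two_cgf_le_of_mem_Icc (hX : AEMeasurable X μ)
    (hb : ∀ᵐ ω ∂μ, X ω ∈ Icc m M) (t : ℝ) :
    iteratedDeriv 2 (cgf X μ) t ≤ ((M - m) / 2) ^ 2 := by
  have hi := integrable_exp_mul_of_mem_Icc (t := t) hX hb
  have : IsProbabilityMeasure (μ.tilted (t * X ·)) := isProbabilityMeasure_tilted hi
  rw [← variance_tilted_mul (by simp [integrableExpSet_eq_univ_of_mem_Icc hX hb])]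
  exact variance_le_sq_of_bounded (tilted_absolutelyContinuous μ _ hb)
    (hX.mono_ac (tilted_absolutelyContinuous μ _))

lemma iteratedDeriv_two_cgf_pos_of_mem_Icc (hX : AEMeasurable X μ)
    (hb : ∀ᵐ ω ∂μ, X ω ∈ Icc m M) (hX_nonconst : ∀ c, ¬ ∀ᵐ ω ∂μ, X ω = c) (t : ℝ) :
    0 < iteratedDeriv 2 (cgf X μ) t := by
  have hi := integrable_exp_mul_of_mem_Icc (t := t) hX hb
  have : IsProbabilityMeasure (μ.tilted (t * X ·)) := isProbabilityMeasure_tilted hi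
  rw [← variance_tilted_mul (by simp [integrableExpSet_eq_univ_of_mem_Icc hX hb])]
  refine (variance_nonneg _ _).lt_of_ne fun h0 ↦ hX_nonconst (μ.tilted (t * X ·))[X] ?_
  have hL2 : MemLp X 2 (μ.tilted (t * X ·)) :=
    memLp_of_bounded (tilted_absolutelyContinuous μ _ hb)
      (hX.mono_ac (tilted_absolutelyContinuous μ _)).aestronglyMeasurable 2
  exact absolutelyContinuous_tilted hi (ae_eq_integral_of_variance_eq_zero hL2 h0.symm)

end CGF

end ProbabilityTheory

lemma integral_cond_Icc {a b : ℝ} (hab : a < b) (f : ℝ → ℝ) :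
    ∫ t, f t ∂volume[|Icc a b] = 1 / (b - a) * ∫ t in a..b, f t := by
  rw [ProbabilityTheory.cond, integral_smul_measure, intervalIntegral.integral_of_le hab.le,
    integral_Icc_eq_integral_Ioc, Real.volume_Icc, ENNReal.toReal_inv,
    ENNReal.toReal_ofReal (sub_pos.2 hab).le, smul_eq_mul, one_div]

lemma isGreatest_half_sq_sub {α : Type*} {s : Set α} {f : α → ℝ} {tmin tmax : α}
    (hmin : tmin ∈ s) (hmax : tmax ∈ s) (hfmin : IsMinOn f s tmin) (hfmax : IsMaxOn f s tmax) :
    IsGreatest {x | ∃ t ∈ s, ∃ u ∈ s, x = 1 / 2 * (f t - f u) ^ 2}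
      (1 / 2 * (f tmax - f tmin) ^ 2) := by
  refine ⟨⟨tmax, hmax, tmin, hmin, rfl⟩, ?_⟩
  rintro x ⟨t, ht, u, hu, rfl⟩
  have hdiff : |f t - f u| ≤ f tmax - f tmin := abs_sub_le_iff.2
    ⟨sub_le_sub (hfmax ht) (hfmin hu), sub_le_sub (hfmax hu) (hfmin ht)⟩
  calc 1 / 2 * (f t - f u) ^ 2 = 1 / 2 * |f t - f u| ^ 2 := by rw [sq_abs]
    _ ≤ 1 / 2 * (f tmax - f tmin) ^ 2 := by gcongr

/-- Context: `a < b`, `E` continuous on `[a,b]`,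
`g z = log( (1/(b-a)) * ∫_a^b exp(z * E t) dt )`.
Statement: if there exist `t, s ∈ [a,b]` with `E t ≠ E s`, then `g` is twice
differentiable on `ℝ` and `0 < g''(z) ≤ sup_{t,s ∈ [a,b]} (1/2)(E(t) − E(s))²`
for every `z`; in particular `g''` is bounded and strictly positive. -/
theorem stmt_5 (a b : ℝ) (hab : a < b) (E : ℝ → ℝ)
    (hE : ContinuousOn E (Set.Icc a b))
    (g : ℝ → ℝ)
    (hg : ∀ z : ℝ, g z = Real.log ((1 / (b - a)) * ∫ t in a..b, Real.exp (z * E t)))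
    (hne : ∃ t ∈ Set.Icc a b, ∃ s ∈ Set.Icc a b, E t ≠ E s) :
    Differentiable ℝ g ∧ Differentiable ℝ (deriv g) ∧
      ∀ z : ℝ,
        0 < deriv (deriv g) z ∧
        deriv (deriv g) z ≤ sSup {x : ℝ | ∃ t ∈ Set.Icc a b, ∃ s ∈ Set.Icc a b,
          x = (1 / 2) * (E t - E s) ^ 2} := by
  obtain ⟨t₀, ht₀, s₀, hs₀, hE₀⟩ := hne
  obtain ⟨tmin, hmin, hEmin⟩ := isCompact_Icc.exists_isMinOn ⟨t₀, ht₀⟩ hE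
  obtain ⟨tmax, hmax, hEmax⟩ := isCompact_Icc.exists_isMaxOn ⟨t₀, ht₀⟩ hE
  set μ := volume[|Icc a b]
  have : IsProbabilityMeasure μ := cond_isProbabilityMeasure_of_finite (by simp [hab]) (by simp)
  have hEμ : AEMeasurable E μ :=
    (hE.aemeasurable measurableSet_Icc).mono_ac cond_absolutelyContinuous_restrict
  have hEb : ∀ᵐ t ∂μ, E t ∈ Icc (E tmin) (E tmax) :=
    ae_cond_of_forall_mem measurableSet_Icc fun t ht ↦ ⟨hEmin ht, hEmax ht⟩
  have hE_nonconst : ∀ c, ¬ ∀ᵐ t ∂μ, E t = c := fun c hc ↦ by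
    have hc' := Measure.eqOn_Icc_of_ae_eq volume hab.ne
      ((restrict_absolutelyContinuous_cond (by simp)).ae_le hc) hE continuousOn_const
    exact hE₀ ((hc' ht₀).trans (hc' hs₀).symm)
  have hg_cgf : g = cgf E μ := funext fun z ↦ by rw [hg, cgf, mgf, integral_cond_Icc hab]
  have hsup := (isGreatest_half_sq_sub hmin hmax hEmin hEmax).csSup_eq
  have hcgf := analyticOnNhd_cgf_of_mem_Icc hEμ hEb
  rw [hg_cgf, hsup]
  refine ⟨fun z ↦ (hcgf z (mem_univ z)).differentiableAt,
    fun z ↦ (hcgf.deriv z (mem_univ z)).differentiableAt, fun z ↦ ?_⟩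
  rw [← iteratedDeriv_one (f := cgf E μ), ← iteratedDeriv_succ]
  refine ⟨iteratedDeriv_two_cgf_pos_of_mem_Icc hEμ hEb hE_nonconst z,
    (iteratedDeriv_two_cgf_le_of_mem_Icc hEμ hEb z).trans ?_⟩
  nlinarith [sq_nonneg (E tmax - E tmin)]
end

section
/- If there exist t, s ∈ [a,b] with E(t) ≠ E(s), then the function g is strictly convex on ℝ. -/
/-!
Write `I z = ∫_a^b exp(z E)`, so that `g z = log I z - log (b - a)`. For `x ≠ y` and weights
`p + q = 1`, Hölder's inequality with exponents `1/p, 1/q` applied to `exp(p x E)` and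
`exp(q y E)` gives `I (p x + q y) ≤ I x ^ p * I y ^ q`, i.e. convexity of `log I`. Equality in
Hölder would force `exp(x E)` and `exp(y E)` to be proportional on `[a,b]`, i.e. `E` to be
constant there. The strict Hölder inequality for positive continuous functions is proved by
integrating the pointwise weighted AM-GM inequality for the normalised functions, which is
strict at a point where they differ.
-/

open Real Set intervalIntegral

section StrictHolder

variable {a b p q : ℝ}

theorem integral_rpow_mul_rpow_lt_one (hab : a < b) (hp : 0 < p) (hq : 0 < q)
    (hpq : p + q = 1) {u v : ℝ → ℝ} (hu : ContinuousOn u (Icc a b))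
    (hv : ContinuousOn v (Icc a b)) (hu₀ : ∀ t ∈ Icc a b, 0 < u t)
    (hv₀ : ∀ t ∈ Icc a b, 0 < v t) (hu₁ : ∫ t in a..b, u t = 1) (hv₁ : ∫ t in a..b, v t = 1)
    (hne : ∃ c ∈ Icc a b, u c ≠ v c) :
    ∫ t in a..b, u t ^ p * v t ^ q < 1 := by
  obtain ⟨c, hc, huv⟩ := hne
  have hcont : ContinuousOn (fun t => u t ^ p * v t ^ q) (Icc a b) :=
    (hu.rpow_const fun t ht => .inl (hu₀ t ht).ne').mul
      (hv.rpow_const fun t ht => .inl (hv₀ t ht).ne')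
  calc ∫ t in a..b, u t ^ p * v t ^ q
      < ∫ t in a..b, (p * u t + q * v t) :=
        integral_lt_integral_of_continuousOn_of_le_of_exists_lt hab hcont
          ((continuousOn_const.mul hu).add (continuousOn_const.mul hv))
          (fun t ht => geom_mean_le_arith_mean2_weighted hp.le hq.le
            (hu₀ t (Ioc_subset_Icc_self ht)).le (hv₀ t (Ioc_subset_Icc_self ht)).le hpq)
          ⟨c, hc, (geom_mean_lt_arith_mean2_weighted_iff_of_pos hp hq
            (hu₀ c hc).le (hv₀ c hc).le hpq).2 huv⟩
    _ = 1 := by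
      rw [integral_add ((hu.intervalIntegrable_of_Icc hab.le).const_mul p)
          ((hv.intervalIntegrable_of_Icc hab.le).const_mul q),
        integral_const_mul, integral_const_mul, hu₁, hv₁, mul_one, mul_one, hpq]

theorem integral_rpow_mul_rpow_lt (hab : a < b) (hp : 0 < p) (hq : 0 < q) (hpq : p + q = 1)
    {f h : ℝ → ℝ} (hf : ContinuousOn f (Icc a b)) (hh : ContinuousOn h (Icc a b))
    (hf₀ : ∀ t ∈ Icc a b, 0 < f t) (hh₀ : ∀ t ∈ Icc a b, 0 < h t)
    (hne : ∃ s ∈ Icc a b, ∃ t ∈ Icc a b, f s * h t ≠ f t * h s) :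
    ∫ t in a..b, f t ^ p * h t ^ q < (∫ t in a..b, f t) ^ p * (∫ t in a..b, h t) ^ q := by
  set F := ∫ t in a..b, f t
  set H := ∫ t in a..b, h t
  have hF : 0 < F := intervalIntegral_pos_of_pos_on (hf.intervalIntegrable_of_Icc hab.le)
    (fun t ht => hf₀ t (Ioo_subset_Icc_self ht)) hab
  have hH : 0 < H := intervalIntegral_pos_of_pos_on (hh.intervalIntegrable_of_Icc hab.le)
    (fun t ht => hh₀ t (Ioo_subset_Icc_self ht)) hab
  have hdiff : ∃ c ∈ Icc a b, f c / F ≠ h c / H := by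
    obtain ⟨s, hs, t, ht, hst⟩ := hne
    by_contra! hprop
    have es := hprop s hs
    have et := hprop t ht
    rw [div_eq_div_iff hF.ne' hH.ne'] at es et
    refine hst (mul_right_cancel₀ hH.ne' ?_)
    linear_combination h t * es - h s * et
  have hnorm := integral_rpow_mul_rpow_lt_one hab hp hq hpq (hf.div_const F) (hh.div_const H)
    (fun t ht => div_pos (hf₀ t ht) hF) (fun t ht => div_pos (hh₀ t ht) hH)
    (by rw [integral_div, div_self hF.ne']) (by rw [integral_div, div_self hH.ne']) hdiff
  have hscale : ∫ t in a..b, (f t / F) ^ p * (h t / H) ^ q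
      = (∫ t in a..b, f t ^ p * h t ^ q) / (F ^ p * H ^ q) := by
    rw [← integral_div]
    refine integral_congr fun t ht => ?_
    rw [uIcc_of_le hab.le] at ht
    rw [div_rpow (hf₀ t ht).le hF.le, div_rpow (hh₀ t ht).le hH.le, div_mul_div_comm]
  rwa [hscale, div_lt_one (by positivity)] at hnorm

end StrictHolder

theorem strictConvexOn_log_comp {V : Type*} [AddCommGroup V] [Module ℝ V] {s : Set V}
    {F : V → ℝ} (hs : Convex ℝ s) (hF : ∀ x ∈ s, 0 < F x)
    (hlt : ∀ x ∈ s, ∀ y ∈ s, x ≠ y → ∀ ⦃p q : ℝ⦄, 0 < p → 0 < q → p + q = 1 →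
      F (p • x + q • y) < F x ^ p * F y ^ q) :
    StrictConvexOn ℝ s fun x => log (F x) := by
  refine ⟨hs, fun x hx y hy hxy p q hp hq hpq => ?_⟩
  have hFx := hF x hx
  have hFy := hF y hy
  calc log (F (p • x + q • y))
      < log (F x ^ p * F y ^ q) :=
        log_lt_log (hF _ (hs hx hy hp.le hq.le hpq)) (hlt x hx y hy hxy hp hq hpq)
    _ = p • log (F x) + q • log (F y) := by
      rw [log_mul (by positivity) (by positivity), log_rpow hFx, log_rpow hFy, smul_eq_mul,
        smul_eq_mul]

section ExpIntegral

variable {a b : ℝ} {E : ℝ → ℝ}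

theorem continuousOn_exp_mul (hE : ContinuousOn E (Icc a b)) (z : ℝ) :
    ContinuousOn (fun t => exp (z * E t)) (Icc a b) :=
  continuous_exp.comp_continuousOn (continuousOn_const.mul hE)

theorem integral_exp_mul_pos (hab : a < b) (hE : ContinuousOn E (Icc a b)) (z : ℝ) :
    0 < ∫ t in a..b, exp (z * E t) :=
  intervalIntegral_pos_of_pos ((continuousOn_exp_mul hE z).intervalIntegrable_of_Icc hab.le)
    (fun _ => exp_pos _) hab

theorem integral_exp_mul_lt_rpow_mul_rpow (hab : a < b) (hE : ContinuousOn E (Icc a b))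
    (hne : ∃ t ∈ Icc a b, ∃ s ∈ Icc a b, E t ≠ E s) {x y : ℝ} (hxy : x ≠ y) {p q : ℝ}
    (hp : 0 < p) (hq : 0 < q) (hpq : p + q = 1) :
    ∫ t in a..b, exp ((p * x + q * y) * E t)
      < (∫ t in a..b, exp (x * E t)) ^ p * (∫ t in a..b, exp (y * E t)) ^ q := by
  have hnonprop : ∃ t ∈ Icc a b, ∃ s ∈ Icc a b,
      exp (x * E t) * exp (y * E s) ≠ exp (x * E s) * exp (y * E t) := by
    obtain ⟨t, ht, s, hs, hts⟩ := hne
    refine ⟨t, ht, s, hs, fun h => ?_⟩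
    rw [← exp_add, ← exp_add, exp_eq_exp] at h
    have : (x - y) * (E t - E s) = 0 := by linarith
    rcases mul_eq_zero.1 this with hxy' | hts'
    · exact hxy (sub_eq_zero.1 hxy')
    · exact hts (sub_eq_zero.1 hts')
  convert integral_rpow_mul_rpow_lt hab hp hq hpq (continuousOn_exp_mul hE x)
    (continuousOn_exp_mul hE y) (fun _ _ => exp_pos _) (fun _ _ => exp_pos _) hnonprop using 3
  rw [← exp_mul, ← exp_mul, ← exp_add]
  ring_nf

end ExpIntegral

/-- Context: `a < b`, `E` continuous on `[a,b]`,
`g z = log( (1/(b-a)) * ∫_a^b exp(z * E t) dt )`.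
Statement: if there exist `t, s ∈ [a,b]` with `E t ≠ E s`, then `g` is strictly
convex on `ℝ`. -/
theorem stmt_6 (a b : ℝ) (hab : a < b) (E : ℝ → ℝ)
    (hE : ContinuousOn E (Set.Icc a b))
    (g : ℝ → ℝ)
    (hg : ∀ z : ℝ, g z = Real.log ((1 / (b - a)) * ∫ t in a..b, Real.exp (z * E t)))
    (hne : ∃ t ∈ Set.Icc a b, ∃ s ∈ Set.Icc a b, E t ≠ E s) :
    StrictConvexOn ℝ Set.univ g := by
  have hg' : g = (fun z => log (∫ t in a..b, exp (z * E t))) + fun _ => log (1 / (b - a)) := by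
    funext z
    rw [hg, log_mul (one_div_pos.2 (sub_pos.2 hab)).ne' (integral_exp_mul_pos hab hE z).ne',
      add_comm]
    rfl
  rw [hg']
  refine (strictConvexOn_log_comp convex_univ (fun z _ => integral_exp_mul_pos hab hE z)
    ?_).add_const _
  exact fun x _ y _ hxy _ _ hp hq hpq => integral_exp_mul_lt_rpow_mul_rpow hab hE hne hxy hp hq hpq
end

section
/- There exists z̄ ∈ ℝ^n such that J(z̄) ≤ J(z) for all z ∈ ℝ^n; that is, the reduced bilevel problem min_z J(z) admits a solution. -/
open Matrix

/-- Bilevel context (`n = m+1 ≥ 2`): the reduced problem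
`min_z J(z) = (1/2)‖K⁻¹Aᵀb(z) + g(z) − d‖₂² + (λ₁/2)‖z‖₂²` admits a solution. -/
theorem stmt_10 (m : ℕ) (hm : 1 ≤ m)
    (a b : Fin (m + 1) → ℝ) (hab : ∀ i, a i < b i)
    (E : Fin (m + 1) → ℝ → ℝ)
    (hE : ∀ i, ContinuousOn (E i) (Set.Icc (a i) (b i)))
    (g : (Fin (m + 1) → ℝ) → Fin (m + 1) → ℝ)
    (hg : ∀ z i, g z i =
      Real.log ((1 / (b i - a i)) * ∫ t in (a i)..(b i), Real.exp (z i * E i t)))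
    (d : Fin (m + 1) → ℝ)
    (bfun : (Fin (m + 1) → ℝ) → Fin m → ℝ)
    (hbfun : ∀ z i, bfun z i =
      (d i.succ - g z i.succ) - (d i.castSucc - g z i.castSucc))
    (A : Matrix (Fin m) (Fin (m + 1)) ℝ)
    (hA : ∀ i j, A i j = if j = i.castSucc then -1 else if j = i.succ then 1 else 0)
    (lam2 : ℝ) (hlam2 : 0 < lam2)
    (K : Matrix (Fin (m + 1)) (Fin (m + 1)) ℝ)
    (hK : K = Aᵀ * A + lam2 • (1 : Matrix (Fin (m + 1)) (Fin (m + 1)) ℝ))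
    (lam1 : ℝ) (hlam1 : 0 < lam1)
    (J : (Fin (m + 1) → ℝ) → ℝ)
    (hJ : ∀ z, J z =
      (1 / 2) * (∑ i, (K⁻¹.mulVec (Aᵀ.mulVec (bfun z)) i + g z i - d i) ^ 2)
        + (lam1 / 2) * (∑ i, (z i) ^ 2)) :
    ∃ zbar : Fin (m + 1) → ℝ, ∀ z : Fin (m + 1) → ℝ, J zbar ≤ J z := by
  -- Step 1: each component of `g` is continuous in `z`.
  have hgc : ∀ i, Continuous (fun z : Fin (m + 1) → ℝ => g z i) := by
    intro i
    set Ei : ℝ → ℝ := Set.IccExtend (hab i).le ((Set.Icc (a i) (b i)).restrict (E i)) with hEi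
    have hEic : Continuous Ei := ((hE i).restrict).Icc_extend'
    have hEq : ∀ z : Fin (m + 1) → ℝ,
        (∫ t in (a i)..(b i), Real.exp (z i * E i t))
          = ∫ t in (a i)..(b i), Real.exp (z i * Ei t) := by
      intro z
      refine intervalIntegral.integral_congr fun t ht => ?_
      rw [Set.uIcc_of_le (hab i).le] at ht
      rw [hEi, Set.IccExtend_of_mem _ _ ht]
      rfl
    have hφc : Continuous (fun s : ℝ => ∫ t in (a i)..(b i), Real.exp (s * Ei t)) := by
      refine intervalIntegral.continuous_parametric_intervalIntegral_of_continuous'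
        (f := fun s t => Real.exp (s * Ei t)) ?_ _ _
      exact Real.continuous_exp.comp (continuous_fst.mul (hEic.comp continuous_snd))
    have hφpos : ∀ s : ℝ, 0 < ∫ t in (a i)..(b i), Real.exp (s * Ei t) := fun s =>
      intervalIntegral.intervalIntegral_pos_of_pos
        ((Real.continuous_exp.comp (continuous_const.mul hEic)).intervalIntegrable _ _)
        (fun t => Real.exp_pos _) (hab i)
    have hrw : (fun z : Fin (m + 1) → ℝ => g z i)
        = fun z => Real.log ((1 / (b i - a i)) * ∫ t in (a i)..(b i), Real.exp (z i * Ei t)) := by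
      funext z; rw [hg, hEq]
    rw [hrw]
    refine continuous_iff_continuousAt.2 fun z => ?_
    have hba : (0 : ℝ) < b i - a i := sub_pos.2 (hab i)
    have hpos : 0 < (1 / (b i - a i)) * ∫ t in (a i)..(b i), Real.exp (z i * Ei t) :=
      mul_pos (by positivity) (hφpos _)
    exact ContinuousAt.log
      ((continuous_const.mul (hφc.comp (continuous_apply i))).continuousAt) hpos.ne'
  -- Step 2: J is continuous.
  have hbc : ∀ i, Continuous (fun z : Fin (m + 1) → ℝ => bfun z i) := by
    intro i
    have : (fun z : Fin (m + 1) → ℝ => bfun z i)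
        = fun z => (d i.succ - g z i.succ) - (d i.castSucc - g z i.castSucc) := by
      funext z; exact hbfun z i
    rw [this]
    exact (continuous_const.sub (hgc _)).sub (continuous_const.sub (hgc _))
  have hmv : ∀ i, Continuous (fun z : Fin (m + 1) → ℝ =>
      K⁻¹.mulVec (Aᵀ.mulVec (bfun z)) i) := by
    intro i
    simp only [Matrix.mulVec, dotProduct]
    refine continuous_finset_sum _ fun j _ => continuous_const.mul ?_
    exact continuous_finset_sum _ fun k _ => continuous_const.mul (hbc k)
  have hJc : Continuous J := by
    have : J = fun z =>
        (1 / 2) * (∑ i, (K⁻¹.mulVec (Aᵀ.mulVec (bfun z)) i + g z i - d i) ^ 2)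
          + (lam1 / 2) * (∑ i, (z i) ^ 2) := funext hJ
    rw [this]
    refine Continuous.add (continuous_const.mul ?_) (continuous_const.mul ?_)
    · exact continuous_finset_sum _ fun i _ =>
        (((hmv i).add (hgc i)).sub continuous_const).pow 2
    · exact continuous_finset_sum _ fun i _ => (continuous_apply i).pow 2
  -- Step 3: coercivity bound and minimization on a compact ball.
  have hJ0 : 0 ≤ J 0 := by rw [hJ]; positivity
  set R : ℝ := Real.sqrt (2 * (J 0 + 1) / lam1) with hR
  have hR0 : 0 ≤ R := Real.sqrt_nonneg _
  have hR2 : lam1 / 2 * R ^ 2 = J 0 + 1 := by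
    rw [hR, Real.sq_sqrt (by positivity)]
    field_simp
  have hball : (0 : Fin (m + 1) → ℝ) ∈ Metric.closedBall 0 R := by
    simp [hR0]
  obtain ⟨zbar, hmem, hmin⟩ :=
    (isCompact_closedBall (0 : Fin (m + 1) → ℝ) R).exists_isMinOn ⟨0, hball⟩ hJc.continuousOn
  refine ⟨zbar, fun z => ?_⟩
  by_cases hz : z ∈ Metric.closedBall 0 R
  · exact hmin hz
  · -- outside the ball, some coordinate exceeds R
    have hz' : R < ‖z‖ := by
      simpa [Metric.mem_closedBall, dist_eq_norm] using hz
    have : ¬ ∀ i, ‖z i‖ ≤ R := by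
      intro h
      exact absurd (pi_norm_le_iff_of_nonneg hR0 |>.2 h) (not_le.2 hz')
    push_neg at this
    obtain ⟨i, hi⟩ := this
    have hsq : R ^ 2 < z i ^ 2 := by
      calc R ^ 2 < ‖z i‖ ^ 2 := by
            exact pow_lt_pow_left₀ hi hR0 (by norm_num)
        _ = z i ^ 2 := by rw [Real.norm_eq_abs, sq_abs]
    have hsum : R ^ 2 < ∑ j, (z j) ^ 2 :=
      lt_of_lt_of_le hsq (Finset.single_le_sum (fun j _ => sq_nonneg (z j)) (Finset.mem_univ i))
    have hJz : J 0 + 1 ≤ J z := by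
      rw [hJ z]
      have h1 : (0:ℝ) ≤ (1 / 2) * (∑ j, (K⁻¹.mulVec (Aᵀ.mulVec (bfun z)) j + g z j - d j) ^ 2) := by
        positivity
      have h2 : lam1 / 2 * R ^ 2 ≤ lam1 / 2 * ∑ j, (z j) ^ 2 :=
        mul_le_mul_of_nonneg_left hsum.le (by positivity)
      linarith [hR2]
    calc J zbar ≤ J 0 := hmin hball
      _ ≤ J z := by linarith
end

section
/- Define F : ℝ^n → ℝ^n by F(z) = K⁻¹Aᵀb(z) + g(z). Then every mixed second-order partial derivative of every component of F vanishes: for all indices i, j, k with j ≠ k and all z ∈ ℝ^n, ∂²F_i/∂z_j∂z_k (z) = 0. Consequently, for any fixed vector α ∈ ℝ^n, the matrix with (j,k) entry Σ_{i=1}^n α_i · ∂²F_i/∂z_j∂z_k (z) is diagonal. -/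
/-!
With `M = K⁻¹AᵀA` one has `b(z) = A(d - g(z))`, hence `F(z) = M d + (1 - M) g(z)` is an affine
image of `g`. Each `g_q` is a differentiable function of `z_q` alone (differentiate under the
integral sign), so `∂F_i/∂z_k (w) = (1 - M)_{ik} g_k'(w_k)` depends on `w_k` only, and its
derivative in any direction `j ≠ k` vanishes.
-/

open Matrix Real Set

theorem fderiv_apply_eq_zero_of_forall_add_smul_eq {𝕜 E F : Type*} [NontriviallyNormedField 𝕜]
    [NormedAddCommGroup E] [NormedSpace 𝕜 E] [NormedAddCommGroup F] [NormedSpace 𝕜 F]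
    {f : E → F} {x v : E} (h : ∀ t : 𝕜, f (x + t • v) = f x) : fderiv 𝕜 f x v = 0 := by
  by_cases hf : DifferentiableAt 𝕜 f x
  · rw [← hf.lineDeriv_eq_fderiv, lineDeriv]
    simp only [h, deriv_const]
  · rw [fderiv_zero_of_not_differentiableAt hf, _root_.zero_apply]

section Separable

variable {ι : Type*} [Fintype ι] [DecidableEq ι] {φ : ι → ℝ → ℝ}

theorem fderiv_sum_mul_comp_apply_single (hφ : ∀ q, Differentiable ℝ (φ q)) (c : ι → ℝ)
    (w : ι → ℝ) (k : ι) :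
    fderiv ℝ (fun v => ∑ q, c q * φ q (v q)) w (Pi.single k 1) = c k * deriv (φ k) (w k) := by
  have hderiv : HasFDerivAt (fun v => ∑ q, c q * φ q (v q))
      (∑ q, (c q * deriv (φ q) (w q)) •
        ContinuousLinearMap.proj (R := ℝ) (φ := fun _ : ι => ℝ) q) w := by
    refine HasFDerivAt.fun_sum fun q _ => ?_
    have := ((hφ q (w q)).hasDerivAt.comp_hasFDerivAt (f := fun v : ι → ℝ => v q) w
      (hasFDerivAt_apply (𝕜 := ℝ) (F' := fun _ : ι => ℝ) q w)).const_mul (c q)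
    simpa [Function.comp_def, smul_smul] using this
  rw [hderiv.fderiv]
  simp [Pi.single_apply]

theorem fderiv_fderiv_sum_mul_comp_apply_single_of_ne (hφ : ∀ q, Differentiable ℝ (φ q))
    (c : ι → ℝ) {j k : ι} (hjk : j ≠ k) (z : ι → ℝ) :
    fderiv ℝ (fun w => fderiv ℝ (fun v => ∑ q, c q * φ q (v q)) w (Pi.single k 1)) z
      (Pi.single j 1) = 0 := by
  simp only [fderiv_sum_mul_comp_apply_single hφ]
  refine fderiv_apply_eq_zero_of_forall_add_smul_eq fun t => ?_
  simp [Pi.single_eq_of_ne' hjk]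

theorem fderiv_fderiv_add_mulVec_comp_apply_single_of_ne {ι' : Type*}
    (hφ : ∀ q, Differentiable ℝ (φ q)) (c : ι' → ℝ) (B : Matrix ι' ι ℝ) (i : ι') {j k : ι}
    (hjk : j ≠ k) (z : ι → ℝ) :
    fderiv ℝ (fun w => fderiv ℝ (fun v => (c + B *ᵥ fun q => φ q (v q)) i) w
      (Pi.single k 1)) z (Pi.single j 1) = 0 := by
  simp only [Pi.add_apply, mulVec, dotProduct, fderiv_const_add]
  exact fderiv_fderiv_sum_mul_comp_apply_single_of_ne hφ (B i) hjk z

end Separable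

theorem hasDerivAt_intervalIntegral_exp_mul {a b : ℝ} {E : ℝ → ℝ}
    (hE : ContinuousOn E (uIcc a b)) (s : ℝ) :
    HasDerivAt (fun s => ∫ t in a..b, exp (s * E t)) (∫ t in a..b, E t * exp (s * E t)) s := by
  obtain ⟨C, hC⟩ := isCompact_uIcc.exists_bound_of_continuousOn hE
  have hcont : ∀ x, ContinuousOn (fun t => exp (x * E t)) (uIcc a b) := fun x =>
    continuous_exp.comp_continuousOn (continuousOn_const.mul hE)
  have hmeas : ∀ {f : ℝ → ℝ}, ContinuousOn f (uIcc a b) →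
      MeasureTheory.AEStronglyMeasurable f (MeasureTheory.volume.restrict (uIoc a b)) :=
    fun hf => (hf.mono uIoc_subset_uIcc).aestronglyMeasurable measurableSet_uIoc
  have hbound : ∀ t ∈ uIoc a b, ∀ x ∈ Metric.ball s 1,
      ‖E t * exp (x * E t)‖ ≤ C * exp ((|s| + 1) * C) := by
    intro t ht x hx
    have hEt : |E t| ≤ C := hC t (uIoc_subset_uIcc ht)
    have hx : |x| ≤ |s| + 1 := by
      have := abs_sub_abs_le_abs_sub x s
      rw [← Real.dist_eq] at this
      linarith [Metric.mem_ball.mp hx]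
    rw [norm_mul, norm_of_nonneg (exp_pos _).le, Real.norm_eq_abs]
    have hC0 : 0 ≤ C := (abs_nonneg _).trans hEt
    refine mul_le_mul hEt (exp_le_exp.2 ?_) (exp_pos _).le hC0
    calc x * E t ≤ |x| * |E t| := by rw [← abs_mul]; exact le_abs_self _
      _ ≤ (|s| + 1) * C := by gcongr
  exact (intervalIntegral.hasDerivAt_integral_of_dominated_loc_of_deriv_le
    (Metric.ball_mem_nhds s one_pos) (Filter.Eventually.of_forall fun x => hmeas (hcont x))
    (hcont s).intervalIntegrable (hmeas (hE.mul (hcont s)))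
    (Filter.Eventually.of_forall hbound) intervalIntegrable_const
    (Filter.Eventually.of_forall fun t _ x _ =>
      by simpa [mul_comm] using ((hasDerivAt_mul_const (E t)).exp : HasDerivAt _ _ x))).2

theorem intervalIntegral_exp_mul_pos {a b : ℝ} (hab : a < b) {E : ℝ → ℝ}
    (hE : ContinuousOn E (Icc a b)) (s : ℝ) : 0 < ∫ t in a..b, exp (s * E t) := by
  refine intervalIntegral.intervalIntegral_pos_of_pos_on ?_ (fun t _ => exp_pos _) hab
  refine ContinuousOn.intervalIntegrable ?_
  rw [uIcc_of_le hab.le]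
  exact continuous_exp.comp_continuousOn (continuousOn_const.mul hE)

theorem differentiable_log_mul_intervalIntegral_exp_mul {a b : ℝ} (hab : a < b) {E : ℝ → ℝ}
    (hE : ContinuousOn E (Icc a b)) {c : ℝ} (hc : c ≠ 0) :
    Differentiable ℝ fun s => log (c * ∫ t in a..b, exp (s * E t)) := fun s =>
  (((hasDerivAt_intervalIntegral_exp_mul (uIcc_of_le hab.le ▸ hE) s).differentiableAt).const_mul
    c).log (mul_ne_zero hc (intervalIntegral_exp_mul_pos hab hE s).ne')

theorem mulVec_eq_succ_sub_castSucc {R : Type*} [Ring R] {m : ℕ}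
    (A : Matrix (Fin m) (Fin (m + 1)) R)
    (hA : ∀ i j, A i j = if j = i.castSucc then -1 else if j = i.succ then 1 else 0)
    (x : Fin (m + 1) → R) : A *ᵥ x = fun p => x p.succ - x p.castSucc := by
  ext p
  simp [mulVec, dotProduct, hA, ite_mul, Finset.sum_ite, Finset.filter_eq',
    Fin.castSucc_lt_succ.ne', neg_add_eq_sub]

theorem stmt_12_general (m : ℕ)
    (a b : Fin (m + 1) → ℝ) (hab : ∀ i, a i < b i)
    (E : Fin (m + 1) → ℝ → ℝ)
    (hE : ∀ i, ContinuousOn (E i) (Set.Icc (a i) (b i)))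
    (g : (Fin (m + 1) → ℝ) → Fin (m + 1) → ℝ)
    (hg : ∀ z i, g z i =
      Real.log ((1 / (b i - a i)) * ∫ t in (a i)..(b i), Real.exp (z i * E i t)))
    (d : Fin (m + 1) → ℝ)
    (bfun : (Fin (m + 1) → ℝ) → Fin m → ℝ)
    (hbfun : ∀ z i, bfun z i =
      (d i.succ - g z i.succ) - (d i.castSucc - g z i.castSucc))
    (A : Matrix (Fin m) (Fin (m + 1)) ℝ)
    (hA : ∀ i j, A i j = if j = i.castSucc then -1 else if j = i.succ then 1 else 0)
    (K : Matrix (Fin (m + 1)) (Fin (m + 1)) ℝ)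
    (F : (Fin (m + 1) → ℝ) → Fin (m + 1) → ℝ)
    (hF : ∀ z, F z = K⁻¹.mulVec (Aᵀ.mulVec (bfun z)) + g z) :
    (∀ (i j k : Fin (m + 1)), j ≠ k → ∀ z : Fin (m + 1) → ℝ,
        fderiv ℝ (fun w => fderiv ℝ (fun v => F v i) w (Pi.single k 1)) z
          (Pi.single j 1) = 0) ∧
    (∀ (α : Fin (m + 1) → ℝ) (z : Fin (m + 1) → ℝ) (j k : Fin (m + 1)), j ≠ k →
        ∑ i, α i *
          fderiv ℝ (fun w => fderiv ℝ (fun v => F v i) w (Pi.single k 1)) z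
            (Pi.single j 1) = 0) := by
  set φ : Fin (m + 1) → ℝ → ℝ :=
    fun q s => log ((1 / (b q - a q)) * ∫ t in (a q)..(b q), exp (s * E q t))
  have hφ : ∀ q, Differentiable ℝ (φ q) := fun q =>
    differentiable_log_mul_intervalIntegral_exp_mul (hab q) (hE q)
      (one_div_ne_zero (sub_pos.2 (hab q)).ne')
  have hb : ∀ z, bfun z = A *ᵥ (d - g z) := fun z => by
    ext p
    rw [mulVec_eq_succ_sub_castSucc A hA, hbfun]
    rfl
  set M := K⁻¹ * Aᵀ * A
  have hF_affine : F = fun v => M *ᵥ d + (1 - M) *ᵥ fun q => φ q (v q) := by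
    funext v
    have hgv : g v = fun q => φ q (v q) := funext (hg v)
    rw [hF, hb, ← hgv, sub_mulVec, one_mulVec]
    simp only [M, ← mulVec_mulVec, mulVec_sub]
    abel
  have mixed : ∀ i j k, j ≠ k → ∀ z, fderiv ℝ (fun w => fderiv ℝ (fun v => F v i) w
      (Pi.single k 1)) z (Pi.single j 1) = 0 := fun i j k hjk z => by
    subst hF_affine
    exact fderiv_fderiv_add_mulVec_comp_apply_single_of_ne hφ _ _ i hjk z
  exact ⟨mixed, fun α z j k hjk =>
    Finset.sum_eq_zero fun i _ => by rw [mixed i j k hjk z, mul_zero]⟩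

/-- Bilevel context (`n = m+1 ≥ 2`): with `F(z) = K⁻¹Aᵀb(z) + g(z)`, every mixed
second-order partial derivative `∂²F_i/∂z_j∂z_k` (`j ≠ k`) vanishes; consequently,
for any `α ∈ ℝ^n` the matrix `(j,k) ↦ ∑ i, α i · ∂²F_i/∂z_j∂z_k (z)` is diagonal. -/
theorem stmt_12 (m : ℕ) (hm : 1 ≤ m)
    (a b : Fin (m + 1) → ℝ) (hab : ∀ i, a i < b i)
    (E : Fin (m + 1) → ℝ → ℝ)
    (hE : ∀ i, ContinuousOn (E i) (Set.Icc (a i) (b i)))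
    (g : (Fin (m + 1) → ℝ) → Fin (m + 1) → ℝ)
    (hg : ∀ z i, g z i =
      Real.log ((1 / (b i - a i)) * ∫ t in (a i)..(b i), Real.exp (z i * E i t)))
    (d : Fin (m + 1) → ℝ)
    (bfun : (Fin (m + 1) → ℝ) → Fin m → ℝ)
    (hbfun : ∀ z i, bfun z i =
      (d i.succ - g z i.succ) - (d i.castSucc - g z i.castSucc))
    (A : Matrix (Fin m) (Fin (m + 1)) ℝ)
    (hA : ∀ i j, A i j = if j = i.castSucc then -1 else if j = i.succ then 1 else 0)
    (lam2 : ℝ) (hlam2 : 0 < lam2)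
    (K : Matrix (Fin (m + 1)) (Fin (m + 1)) ℝ)
    (hK : K = Aᵀ * A + lam2 • (1 : Matrix (Fin (m + 1)) (Fin (m + 1)) ℝ))
    (F : (Fin (m + 1) → ℝ) → Fin (m + 1) → ℝ)
    (hF : ∀ z, F z = K⁻¹.mulVec (Aᵀ.mulVec (bfun z)) + g z) :
    (∀ (i j k : Fin (m + 1)), j ≠ k → ∀ z : Fin (m + 1) → ℝ,
        fderiv ℝ (fun w => fderiv ℝ (fun v => F v i) w (Pi.single k 1)) z
          (Pi.single j 1) = 0) ∧
    (∀ (α : Fin (m + 1) → ℝ) (z : Fin (m + 1) → ℝ) (j k : Fin (m + 1)), j ≠ k →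
        ∑ i, α i *
          fderiv ℝ (fun w => fderiv ℝ (fun v => F v i) w (Pi.single k 1)) z
            (Pi.single j 1) = 0) :=
  stmt_12_general m a b hab E hE g hg d bfun hbfun A hA K F hF
end

section
/- Assume that for each i = 1,…,n there exist t, s ∈ [a_i,b_i] with E_i(t) ≠ E_i(s). Then for every δ > 0 there exists λ₁ > 0 such that the reduced objective J (defined with this λ₁) is strictly convex on the closed ball of radius δ centered at the origin in ℝ^n. -/
/-!
Each `g i` is, up to an additive constant, the cumulant generating function of `E i` under
Lebesgue measure on `(a i, b i]`, hence analytic; so the misfit term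
`z ↦ ½ ‖K⁻¹ Aᵀ b(z) + g(z) - d‖²` is `C²`. On the compact ball its Hessian is bounded below by
`-C`, and adding `(λ₁/2) ‖z‖²` with `λ₁ > C` makes the second derivative of `J` along every
segment positive.
-/

open Set Filter AffineMap Real ProbabilityTheory MeasureTheory Matrix

theorem strictConvexOn_of_forall_lineMap {E : Type*} [AddCommGroup E] [Module ℝ E]
    {s : Set E} {f : E → ℝ} (hs : Convex ℝ s)
    (h : ∀ x ∈ s, ∀ y ∈ s, x ≠ y → StrictConvexOn ℝ (Icc (0 : ℝ) 1) (fun t => f (lineMap x y t))) :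
    StrictConvexOn ℝ s f := by
  refine ⟨hs, fun x hx y hy hxy a b ha hb hab => ?_⟩
  have hseg := (h x hx y hy hxy).2 (left_mem_Icc.2 zero_le_one) (right_mem_Icc.2 zero_le_one)
    zero_ne_one ha hb hab
  have ha' : a = 1 - b := by linarith
  simpa [lineMap_apply_module, ha'] using hseg

theorem StrictConvexOn.comp_linearEquiv {E F : Type*} [AddCommMonoid E] [Module ℝ E]
    [AddCommMonoid F] [Module ℝ F] {s : Set F} {f : F → ℝ} (hf : StrictConvexOn ℝ s f)
    (e : E ≃ₗ[ℝ] F) : StrictConvexOn ℝ (e ⁻¹' s) (f ∘ e) :=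
  ⟨hf.1.linear_preimage e.toLinearMap, fun x hx y hy hxy a b ha hb hab =>
    calc f (e (a • x + b • y)) = f (a • e x + b • e y) := by rw [map_add, map_smul, map_smul]
      _ < a • f (e x) + b • f (e y) := hf.2 hx hy (e.injective.ne hxy) ha hb hab⟩

section InnerProductSpace

variable {E : Type*} [NormedAddCommGroup E] [InnerProductSpace ℝ E] {F : E → ℝ} {s : Set E}

open scoped RealInnerProductSpace

theorem strictConvexOn_add_mul_norm_sq (hF : ContDiff ℝ 2 F) (hs : Convex ℝ s) {C lam : ℝ}
    (hC : ∀ p ∈ s, ‖fderiv ℝ (fderiv ℝ F) p‖ ≤ C) (hlam : C < lam) :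
    StrictConvexOn ℝ s (fun z => F z + lam / 2 * ‖z‖ ^ 2) := by
  refine strictConvexOn_of_forall_lineMap hs fun x hx y hy hxy => ?_
  set p : ℝ → E := fun t => lineMap x y t
  have hp (t : ℝ) : HasDerivAt p (y - x) t := hasDerivAt_lineMap
  have hF1 (q : E) : HasFDerivAt F (fderiv ℝ F q) q :=
    (hF.differentiable (by norm_num)).differentiableAt.hasFDerivAt
  have hF2 (q : E) : HasFDerivAt (fderiv ℝ F) (fderiv ℝ (fderiv ℝ F) q) q :=
    ((hF.fderiv_right (m := 1) (by norm_num)).differentiable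
      (by norm_num)).differentiableAt.hasFDerivAt
  have hφ' (t : ℝ) : HasDerivAt (fun t => F (p t) + lam / 2 * ‖p t‖ ^ 2)
      (fderiv ℝ F (p t) (y - x) + lam * ⟪p t, y - x⟫) t := by
    refine (((hF1 (p t)).comp_hasDerivAt t (hp t)).add
      (((hp t).norm_sq).const_mul (lam / 2))).congr_deriv ?_
    ring
  have hφ'' (t : ℝ) : HasDerivAt (fun t => fderiv ℝ F (p t) (y - x) + lam * ⟪p t, y - x⟫)
      (fderiv ℝ (fderiv ℝ F) (p t) (y - x) (y - x) + lam * ‖y - x‖ ^ 2) t := by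
    have h1 := ((hF2 (p t)).comp_hasDerivAt t (hp t)).clm_apply (hasDerivAt_const t (y - x))
    have h2 := ((hp t).inner ℝ (hasDerivAt_const t (y - x))).const_mul lam
    refine (h1.add h2).congr_deriv ?_
    simp
  have hφ2 (t : ℝ) : deriv^[2] (fun t => F (p t) + lam / 2 * ‖p t‖ ^ 2) t
      = fderiv ℝ (fderiv ℝ F) (p t) (y - x) (y - x) + lam * ‖y - x‖ ^ 2 := by
    rw [Function.iterate_succ_apply, Function.iterate_one, funext fun t => (hφ' t).deriv,
      (hφ'' t).deriv]
  refine strictConvexOn_of_deriv2_pos (convex_Icc 0 1)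
    (fun t _ => (hφ' t).continuousAt.continuousWithinAt) fun t ht => ?_
  rw [interior_Icc] at ht
  have hpt : p t ∈ s := hs.lineMap_mem hx hy ⟨ht.1.le, ht.2.le⟩
  have hD2 : |fderiv ℝ (fderiv ℝ F) (p t) (y - x) (y - x)| ≤ C * ‖y - x‖ ^ 2 :=
    calc _ ≤ ‖fderiv ℝ (fderiv ℝ F) (p t)‖ * ‖y - x‖ * ‖y - x‖ :=
          (fderiv ℝ (fderiv ℝ F) (p t)).le_opNorm₂ _ _
      _ ≤ C * ‖y - x‖ ^ 2 := by
          rw [mul_assoc, ← sq]; gcongr; exact hC _ hpt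
  have hv : 0 < ‖y - x‖ ^ 2 := by
    have := sub_ne_zero.2 hxy.symm
    positivity
  rw [hφ2]
  nlinarith [neg_abs_le (fderiv ℝ (fderiv ℝ F) (p t) (y - x) (y - x))]

theorem eventually_strictConvexOn_add_mul_norm_sq (hF : ContDiff ℝ 2 F) (hs : Convex ℝ s)
    (hsc : IsCompact s) :
    ∀ᶠ lam in atTop, StrictConvexOn ℝ s (fun z => F z + lam / 2 * ‖z‖ ^ 2) := by
  obtain ⟨C, hC⟩ := hsc.exists_bound_of_continuousOn
    ((hF.fderiv_right (m := 1) (by norm_num)).continuous_fderiv one_ne_zero).continuousOn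
  exact (eventually_gt_atTop C).mono fun lam hlam => strictConvexOn_add_mul_norm_sq hF hs hC hlam

end InnerProductSpace

theorem eventually_strictConvexOn_add_mul_sum_sq {ι : Type*} [Fintype ι]
    {F : (ι → ℝ) → ℝ} {s : Set (ι → ℝ)} (hF : ContDiff ℝ 2 F) (hs : Convex ℝ s)
    (hsc : IsCompact s) :
    ∀ᶠ lam in atTop, StrictConvexOn ℝ s (fun z => F z + lam / 2 * ∑ i, z i ^ 2) := by
  -- `ι → ℝ` carries the sup norm; `∑ i, z i ^ 2` is the squared norm of `EuclideanSpace ℝ ι`.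
  set e := EuclideanSpace.equiv ι ℝ
  filter_upwards [eventually_strictConvexOn_add_mul_norm_sq (hF.comp e.contDiff)
    (hs.linear_preimage e.toLinearMap) (e.toHomeomorph.isCompact_preimage.2 hsc)] with lam h
  have := h.comp_linearEquiv e.symm.toLinearEquiv
  simp only [ContinuousLinearEquiv.toLinearEquiv_symm, ContinuousLinearEquiv.coe_symm_toLinearEquiv,
    LinearEquiv.coe_coe, ContinuousLinearEquiv.coe_toLinearEquiv, preimage_preimage,
    PiLp.continuousLinearEquiv_symm_apply, Function.comp_apply, EuclideanSpace.real_norm_sq_eq,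
    Function.comp_def, e] at this
  exact this

theorem contDiff_log_integral_exp_mul {a b : ℝ} (hab : a < b) {E : ℝ → ℝ}
    (hE : ContinuousOn E (Icc a b)) {n : WithTop ℕ∞} :
    ContDiff ℝ n (fun w => log ((1 / (b - a)) * ∫ t in a..b, exp (w * E t))) := by
  set μ := volume.restrict (Ioc a b)
  have hint (w : ℝ) : Integrable (fun t => exp (w * E t)) μ :=
    ((continuous_exp.comp_continuousOn (continuousOn_const.mul hE)).integrableOn_Icc).mono_set
      Ioc_subset_Icc_self
  have hmgf (w : ℝ) : ∫ t in a..b, exp (w * E t) = mgf E μ w :=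
    intervalIntegral.integral_of_le hab.le
  refine AnalyticOnNhd.contDiff fun w _ => ?_
  simp only [hmgf]
  have hw : w ∈ interior (integrableExpSet E μ) := by
    simp [integrableExpSet, hint]
  refine (analyticAt_const.mul (analyticAt_mgf hw)).log ?_
  exact mul_pos (by simp [hab]) (mgf_pos' (by simp [μ, hab]) (hint w))

theorem ContDiff.matrix_mulVec {E m n : Type*} [NormedAddCommGroup E] [NormedSpace ℝ E]
    [Fintype m] [Fintype n] (M : Matrix m n ℝ) {f : E → n → ℝ} {k : WithTop ℕ∞}
    (hf : ContDiff ℝ k f) : ContDiff ℝ k (fun x => M *ᵥ f x) :=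
  (Matrix.mulVecLin M).toContinuousLinearMap.contDiff.comp hf

theorem stmt_13_general (m : ℕ)
    (a b : Fin (m + 1) → ℝ) (hab : ∀ i, a i < b i)
    (E : Fin (m + 1) → ℝ → ℝ)
    (hE : ∀ i, ContinuousOn (E i) (Set.Icc (a i) (b i)))
    (g : (Fin (m + 1) → ℝ) → Fin (m + 1) → ℝ)
    (hg : ∀ z i, g z i =
      Real.log ((1 / (b i - a i)) * ∫ t in (a i)..(b i), Real.exp (z i * E i t)))
    (d : Fin (m + 1) → ℝ)
    (bfun : (Fin (m + 1) → ℝ) → Fin m → ℝ)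
    (hbfun : ∀ z i, bfun z i =
      (d i.succ - g z i.succ) - (d i.castSucc - g z i.castSucc))
    (A : Matrix (Fin m) (Fin (m + 1)) ℝ)
    (K : Matrix (Fin (m + 1)) (Fin (m + 1)) ℝ) :
    ∀ δ : ℝ, 0 < δ → ∃ lam1 : ℝ, 0 < lam1 ∧
      StrictConvexOn ℝ (Metric.closedBall (0 : Fin (m + 1) → ℝ) δ)
        (fun z =>
          (1 / 2) * (∑ i, (K⁻¹.mulVec (Aᵀ.mulVec (bfun z)) i + g z i - d i) ^ 2)
            + (lam1 / 2) * (∑ i, (z i) ^ 2)) := by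
  intro δ _
  have hg' : ContDiff ℝ 2 g := by
    rw [show g = _ from funext fun z => funext (hg z)]
    exact contDiff_pi.2 fun i =>
      (contDiff_log_integral_exp_mul (hab i) (hE i)).comp (contDiff_apply ℝ ℝ i)
  have hb' : ContDiff ℝ 2 bfun := by
    rw [show bfun = _ from funext fun z => funext (hbfun z)]
    exact contDiff_pi.2 fun i => by fun_prop
  have hmisfit : ContDiff ℝ 2 fun z =>
      (1 / 2) * (∑ i, (K⁻¹.mulVec (Aᵀ.mulVec (bfun z)) i + g z i - d i) ^ 2) := by
    have := (hb'.matrix_mulVec Aᵀ).matrix_mulVec K⁻¹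
    fun_prop
  obtain ⟨lam1, hconv, hpos⟩ := ((eventually_strictConvexOn_add_mul_sum_sq hmisfit
    (convex_closedBall 0 δ) (isCompact_closedBall 0 δ)).and (eventually_gt_atTop 0)).exists
  exact ⟨lam1, hpos, hconv⟩

/-- Bilevel context (`n = m+1 ≥ 2`): if for each `i` there are `t, s ∈ [aᵢ,bᵢ]` with
`Eᵢ t ≠ Eᵢ s`, then for every `δ > 0` there exists `λ₁ > 0` such that the reduced
objective `J` (with this `λ₁`) is strictly convex on the closed ball of radius `δ`
centered at the origin. -/
theorem stmt_13 (m : ℕ) (hm : 1 ≤ m)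
    (a b : Fin (m + 1) → ℝ) (hab : ∀ i, a i < b i)
    (E : Fin (m + 1) → ℝ → ℝ)
    (hE : ∀ i, ContinuousOn (E i) (Set.Icc (a i) (b i)))
    (g : (Fin (m + 1) → ℝ) → Fin (m + 1) → ℝ)
    (hg : ∀ z i, g z i =
      Real.log ((1 / (b i - a i)) * ∫ t in (a i)..(b i), Real.exp (z i * E i t)))
    (d : Fin (m + 1) → ℝ)
    (bfun : (Fin (m + 1) → ℝ) → Fin m → ℝ)
    (hbfun : ∀ z i, bfun z i =
      (d i.succ - g z i.succ) - (d i.castSucc - g z i.castSucc))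
    (A : Matrix (Fin m) (Fin (m + 1)) ℝ)
    (hA : ∀ i j, A i j = if j = i.castSucc then -1 else if j = i.succ then 1 else 0)
    (lam2 : ℝ) (hlam2 : 0 < lam2)
    (K : Matrix (Fin (m + 1)) (Fin (m + 1)) ℝ)
    (hK : K = Aᵀ * A + lam2 • (1 : Matrix (Fin (m + 1)) (Fin (m + 1)) ℝ))
    (hne : ∀ i, ∃ t ∈ Set.Icc (a i) (b i), ∃ s ∈ Set.Icc (a i) (b i),
      E i t ≠ E i s) :
    ∀ δ : ℝ, 0 < δ → ∃ lam1 : ℝ, 0 < lam1 ∧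
      StrictConvexOn ℝ (Metric.closedBall (0 : Fin (m + 1) → ℝ) δ)
        (fun z =>
          (1 / 2) * (∑ i, (K⁻¹.mulVec (Aᵀ.mulVec (bfun z)) i + g z i - d i) ^ 2)
            + (lam1 / 2) * (∑ i, (z i) ^ 2)) :=
  stmt_13_general m a b hab E hE g hg d bfun hbfun A K
end
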